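/- Let A ∈ B^{n×n}, λ ∈ B, K, L a partition of N = {1,...,n}, and fix x_L ∈ B^L. The equation A_{KK} ⊗ x_K ⊕ A_{KL} ⊗ x_L = x_K has a solution x_K with x_K ≤ λ·1_K if and only if (A_{KK})^* ⊗ A_{KL} ⊗ x_L ≤ λ·1_K. In that case the set of such solutions equals { (A_{KK})^* ⊗ A_{KL} ⊗ x_L ⊕ v : v ∈ B^K, A_{KK} ⊗ v = v, v ≤ λ·1_K }, which also equals { (A_{KK})^* ⊗ A_{KL} ⊗ x_L ⊕ (A_{KK})^*_λ ⊗ z : z ∈ B^{|K|} }. -/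

import Mathlib

noncomputable section

/-- The max-min algebra: the unit interval `[0,1] ⊆ ℝ` with `⊕ = max = ⊔` and `⊗ = min = ⊓`. -/
abbrev B : Type := unitInterval

instance : Fact ((0:ℝ) ≤ 1) := ⟨zero_le_one⟩

/-- Max-min matrix-vector product: `(A ⊗ x)_i = max_j min (A i j) (x j)`. -/
def mmVec {α β : Type*} (A : Matrix α β B) (x : β → B) : α → B :=
  fun i => ⨆ j, A i j ⊓ x j

/-- Max-min matrix-matrix product. -/
def mmMul {α β γ : Type*} (A : Matrix α β B) (C : Matrix β γ B) : Matrix α γ B :=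
  fun i k => ⨆ j, A i j ⊓ C j k

/-- The max-min identity matrix. -/
def mmId (α : Type*) [DecidableEq α] : Matrix α α B :=
  fun i j => if i = j then 1 else 0

/-- Max-min matrix powers, `A^0 = I`. -/
def mmPow {α : Type*} [DecidableEq α] (A : Matrix α α B) : ℕ → Matrix α α B
  | 0 => mmId α
  | k + 1 => mmMul A (mmPow A k)

/-- The metric matrix `A⁺ = A ⊕ A² ⊕ ... ⊕ Aⁿ`. -/
def mmPlus {α : Type*} [Fintype α] [DecidableEq α] (A : Matrix α α B) : Matrix α α B :=
  fun i j => ⨆ k ∈ Finset.Icc 1 (Fintype.card α), mmPow A k i j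

/-- The Kleene star `A* = I ⊕ A ⊕ ... ⊕ A^{n-1}`. -/
def mmStar {α : Type*} [Fintype α] [DecidableEq α] (A : Matrix α α B) : Matrix α α B :=
  fun i j => ⨆ k ∈ Finset.range (Fintype.card α), mmPow A k i j

/-- The matrix `A*_λ`, whose `i`-th column has entries `min (λ, (A⁺)_{ii}, (A*)_{ki})`. -/
def mmStarLam {α : Type*} [Fintype α] [DecidableEq α] (A : Matrix α α B) (lam : B) :
    Matrix α α B :=
  fun k i => lam ⊓ mmPlus A i i ⊓ mmStar A k i

/-- Submatrix of `A` with rows in `P` and columns in `Q`. -/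
def subM {n : ℕ} (A : Matrix (Fin n) (Fin n) B) (P Q : Finset (Fin n)) :
    Matrix ↥P ↥Q B :=
  fun i j => A i j

/-- Subvector of `x` indexed by `P`. -/
def subV {n : ℕ} (x : Fin n → B) (P : Finset (Fin n)) : ↥P → B :=
  fun i => x i

/-- `x` is a `(K,L)` `λ`-eigenvector of `A`: `A ⊗ x = λ ⊗ x`, `x_i ≤ λ` for `i ∈ K`,
`x_i ≥ λ` for `i ∈ L`. -/
def IsKLEig {n : ℕ} (A : Matrix (Fin n) (Fin n) B) (lam : B) (K L : Finset (Fin n))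
    (x : Fin n → B) : Prop :=
  mmVec A x = (fun i => lam ⊓ x i) ∧ (∀ i ∈ K, x i ≤ lam) ∧ (∀ i ∈ L, lam ≤ x i)

/-!
`M* ⊗ b` is the least solution of `x = M ⊗ x ⊕ b`, and unfolding the equation `m = |K|` times
gives `x ≤ M^m ⊗ x ⊕ M* ⊗ b` for every solution. A walk of length `m` repeats a vertex, so it
runs through a cycle: cutting the cycle out bounds `M^m` by `M*`, and routing through a vertex of
the cycle bounds `M^m ⊗ x` by `M*_λ ⊗ x` when `M ⊗ x ≤ x ≤ λ`. So every solution `x ≤ λ` equals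
`M* ⊗ b ⊕ M*_λ ⊗ x`, and `M*_λ ⊗ x` is a fixed point of `M` below `λ` since `M ⊗ M* = M⁺`.
-/

open Finset

section Algebra

variable {α β γ δ : Type*}

lemma mmVec_mono (M : Matrix α β B) : Monotone (mmVec M) :=
  fun _ _ h _ => iSup_mono fun j => inf_le_inf_left _ (h j)

lemma mmVec_sup (M : Matrix α β B) (x y : β → B) :
    mmVec M (x ⊔ y) = mmVec M x ⊔ mmVec M y := by
  funext i
  simp only [mmVec, Pi.sup_apply, inf_sup_left, iSup_sup_eq]

lemma mmVec_sup_left (P Q : Matrix α β B) (x : β → B) :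
    mmVec (fun i j => P i j ⊔ Q i j) x = mmVec P x ⊔ mmVec Q x := by
  funext i
  simp only [mmVec, Pi.sup_apply, inf_sup_right, iSup_sup_eq]

lemma mmVec_mmMul (P : Matrix α β B) (Q : Matrix β γ B) (x : γ → B) :
    mmVec (mmMul P Q) x = mmVec P (mmVec Q x) := by
  funext i
  simp only [mmVec, mmMul, iSup_inf_eq, inf_iSup_eq, inf_assoc]
  exact iSup_comm

lemma mmMul_assoc (P : Matrix α β B) (Q : Matrix β γ B) (R : Matrix γ δ B) :
    mmMul (mmMul P Q) R = mmMul P (mmMul Q R) := by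
  funext i l
  exact congrFun (mmVec_mmMul P Q fun k => R k l) i

lemma mmVec_mmId [DecidableEq α] (x : α → B) : mmVec (mmId α) x = x := by
  funext i
  refine le_antisymm (iSup_le fun j => ?_) (le_iSup_of_le i (by simp [mmId, unitInterval.le_one']))
  by_cases h : i = j
  · subst h
    exact inf_le_right
  · simp [mmId, h]

lemma mmId_mmMul [DecidableEq α] (P : Matrix α β B) : mmMul (mmId α) P = P := by
  funext i j
  exact congrFun (mmVec_mmId fun l => P l j) i

lemma mmPow_add [DecidableEq α] (M : Matrix α α B) (a b : ℕ) :
    mmPow M (a + b) = mmMul (mmPow M a) (mmPow M b) := by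
  induction a with
  | zero => rw [zero_add]; exact (mmId_mmMul _).symm
  | succ a ih => rw [Nat.add_right_comm, mmPow, ih, mmPow, mmMul_assoc]

lemma mmVec_mmPow_zero [DecidableEq α] (M : Matrix α α B) (x : α → B) :
    mmVec (mmPow M 0) x = x :=
  mmVec_mmId x

lemma mmVec_mmPow_succ [DecidableEq α] (M : Matrix α α B) (k : ℕ) (x : α → B) :
    mmVec (mmPow M (k + 1)) x = mmVec M (mmVec (mmPow M k) x) :=
  mmVec_mmMul _ _ _

lemma mmVec_mmPow_le [DecidableEq α] (M : Matrix α α B) {x b : α → B} (hx : mmVec M x ≤ x)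
    (hb : b ≤ x) (k : ℕ) : mmVec (mmPow M k) b ≤ x := by
  induction k with
  | zero => rwa [mmVec_mmPow_zero]
  | succ k ih => rw [mmVec_mmPow_succ]; exact (mmVec_mono M ih).trans hx

lemma mmVec_sup_of_fixed (M : Matrix α α B) {b c v : α → B} (hc : mmVec M c ⊔ b = c)
    (hv : mmVec M v = v) : mmVec M (c ⊔ v) ⊔ b = c ⊔ v := by
  rw [mmVec_sup, hv, sup_right_comm, hc]

end Algebra

section Walks

variable {α : Type*} (M : Matrix α α B)

def walkWeight (k : ℕ) (p : ℕ → α) : B :=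
  ⨅ t < k, M (p t) (p (t + 1))

lemma mmPow_eq_iSup_walkWeight [DecidableEq α] (k : ℕ) (i j : α) :
    mmPow M k i j = ⨆ (p : ℕ → α) (_ : p 0 = i ∧ p k = j), walkWeight M k p := by
  induction k generalizing i with
  | zero =>
    by_cases h : i = j
    · subst h
      refine le_antisymm (le_iSup₂_of_le (fun _ => i) ⟨rfl, rfl⟩ ?_) (iSup₂_le fun _ _ => ?_)
      · simp [walkWeight]
      · simp only [mmPow, mmId]
        exact unitInterval.le_one'
    · simp only [mmPow, mmId, if_neg h]
      exact le_antisymm bot_le (iSup₂_le fun p hp => absurd (hp.1.symm.trans hp.2) h)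
  | succ k ih =>
    simp only [mmPow, mmMul, ih, inf_iSup₂_eq]
    refine le_antisymm (iSup_le fun l => iSup₂_le fun p hp => ?_)
      (iSup₂_le fun p hp =>
        le_iSup_of_le (p 1) (le_iSup₂_of_le (fun t => p (t + 1)) ⟨rfl, hp.2⟩ ?_))
    · refine le_iSup₂_of_le (fun t => Nat.casesOn t i p) ⟨rfl, hp.2⟩ ?_
      unfold walkWeight
      rw [Nat.iInf_lt_succ', ← hp.1]
      exact le_rfl
    · rw [walkWeight, Nat.iInf_lt_succ', hp.1]
      rfl

lemma walkWeight_le_mmPow_segment [DecidableEq α] (p : ℕ → α) {a b k : ℕ} (hab : a ≤ b)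
    (hbk : b ≤ k) :
    walkWeight M k p ≤ mmPow M (b - a) (p a) (p b) := by
  rw [mmPow_eq_iSup_walkWeight]
  refine le_iSup₂_of_le (fun t => p (a + t)) ⟨rfl, congrArg p (Nat.add_sub_cancel' hab)⟩ ?_
  exact le_iInf₂ fun t ht => iInf₂_le (a + t) (by omega)

lemma exists_lt_le_card_eq [Fintype α] (p : ℕ → α) :
    ∃ s t, s < t ∧ t ≤ Fintype.card α ∧ p s = p t := by
  obtain ⟨u, w, huw, hp⟩ := Fintype.exists_ne_map_eq_of_card_lt
    (fun u : Fin (Fintype.card α + 1) => p u) (by simp)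
  rcases Fin.lt_or_lt_of_ne huw with h | h
  · exact ⟨u, w, h, Nat.lt_succ_iff.mp w.2, hp⟩
  · exact ⟨w, u, h, Nat.lt_succ_iff.mp u.2, hp.symm⟩

end Walks

section Star

variable {α : Type*} [Fintype α] [DecidableEq α] (M : Matrix α α B)

lemma mmPow_le_mmStar_of_lt {k : ℕ} (hk : k < Fintype.card α) (i j : α) :
    mmPow M k i j ≤ mmStar M i j :=
  le_iSup₂_of_le k (mem_range.2 hk) le_rfl

lemma mmPow_le_mmPlus {k : ℕ} (h1 : 1 ≤ k) (hk : k ≤ Fintype.card α) (i j : α) :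
    mmPow M k i j ≤ mmPlus M i j :=
  le_iSup₂_of_le k (mem_Icc.2 ⟨h1, hk⟩) le_rfl

lemma mmPow_card_le_mmStar (i j : α) : mmPow M (Fintype.card α) i j ≤ mmStar M i j := by
  rw [mmPow_eq_iSup_walkWeight]
  refine iSup₂_le fun p ⟨hi, hj⟩ => ?_
  obtain ⟨s, t, hst, ht, hpst⟩ := exists_lt_le_card_eq p
  have hcut : walkWeight M (Fintype.card α) p ≤ mmPow M (s + (Fintype.card α - t)) i j := by
    rw [mmPow_add]
    refine le_iSup_of_le (p s) (le_inf ?_ ?_)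
    · simpa [hi] using walkWeight_le_mmPow_segment M p (Nat.zero_le s) (hst.le.trans ht)
    · simpa [hpst, hj] using walkWeight_le_mmPow_segment M p ht le_rfl
  exact hcut.trans (mmPow_le_mmStar_of_lt M (by omega) i j)

lemma mmStar_eq_mmId_sup_mmPlus : mmStar M = fun i j => mmId α i j ⊔ mmPlus M i j := by
  funext i j
  have hcard : 0 < Fintype.card α := Fintype.card_pos_iff.2 ⟨i⟩
  refine le_antisymm (iSup₂_le fun k hk => ?_) (sup_le ?_ (iSup₂_le fun k hk => ?_))
  · rcases k with _ | k
    · exact le_sup_left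
    · exact le_sup_of_le_right (mmPow_le_mmPlus M le_add_self (by simp at hk; omega) i j)
  · exact mmPow_le_mmStar_of_lt M hcard i j
  · rcases (mem_Icc.1 hk).2.lt_or_eq with hk | rfl
    · exact mmPow_le_mmStar_of_lt M hk i j
    · exact mmPow_card_le_mmStar M i j

lemma mmMul_mmStar : mmMul M (mmStar M) = mmPlus M := by
  funext i j
  refine le_antisymm (iSup_le fun l => ?_) (iSup₂_le fun k hk => ?_)
  · rw [mmStar, inf_iSup₂_eq]
    refine iSup₂_le fun k hk => (le_iSup (fun l => M i l ⊓ mmPow M k l j) l).trans ?_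
    exact mmPow_le_mmPlus M le_add_self (by simp at hk; omega) i j
  · obtain ⟨k, rfl⟩ : ∃ k', k = k' + 1 := Nat.exists_eq_add_one.2 (mem_Icc.1 hk).1
    exact iSup_mono fun l =>
      inf_le_inf_left _ (mmPow_le_mmStar_of_lt M (by simp at hk; omega) l j)

lemma mmVec_mmStar_eq_sup (b : α → B) :
    mmVec (mmStar M) b = b ⊔ mmVec M (mmVec (mmStar M) b) := by
  conv_lhs => rw [mmStar_eq_mmId_sup_mmPlus]
  rw [mmVec_sup_left, mmVec_mmId, ← mmMul_mmStar, mmVec_mmMul]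

lemma mmVec_mmStar_le {x b : α → B} (hx : mmVec M x ≤ x) (hb : b ≤ x) :
    mmVec (mmStar M) b ≤ x := by
  intro i
  refine iSup_le fun j => ?_
  rw [mmStar, iSup₂_inf_eq]
  exact iSup₂_le fun k _ =>
    (le_iSup (fun j => mmPow M k i j ⊓ b j) j).trans (mmVec_mmPow_le M hx hb k i)

lemma le_mmPow_sup_mmStar {x b : α → B} (hx : mmVec M x ⊔ b = x) (k : ℕ) :
    x ≤ mmVec (mmPow M k) x ⊔ mmVec (mmStar M) b := by
  induction k with
  | zero => rw [mmVec_mmPow_zero]; exact le_sup_left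
  | succ k ih =>
    calc x = mmVec M x ⊔ b := hx.symm
      _ ≤ mmVec M (mmVec (mmPow M k) x ⊔ mmVec (mmStar M) b) ⊔ b :=
        sup_le_sup_right (mmVec_mono M ih) b
      _ = mmVec (mmPow M (k + 1)) x ⊔ mmVec (mmStar M) b := by
        rw [mmVec_sup, sup_assoc, sup_comm (mmVec M _) b, ← mmVec_mmStar_eq_sup,
          mmVec_mmPow_succ]

end Star

section StarLam

variable {α : Type*} [Fintype α] [DecidableEq α] (M : Matrix α α B) (lam : B)

lemma mmVec_mmStarLam_le (z : α → B) (i : α) : mmVec (mmStarLam M lam) z i ≤ lam :=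
  iSup_le fun _ => inf_le_left.trans (inf_le_left.trans inf_le_left)

lemma mmPlus_inf_mmStar_le (k i : α) : mmPlus M i i ⊓ mmStar M k i ≤ mmPlus M k i := by
  rw [mmStar_eq_mmId_sup_mmPlus, inf_sup_left]
  refine sup_le ?_ inf_le_right
  by_cases h : k = i
  · subst h
    exact inf_le_left
  · simp [mmId, h]

lemma mmMul_mmStarLam : mmMul M (mmStarLam M lam) = mmStarLam M lam := by
  funext k i
  calc mmMul M (mmStarLam M lam) k i = lam ⊓ mmPlus M i i ⊓ mmMul M (mmStar M) k i := by
        simp only [mmMul, mmStarLam, inf_iSup_eq]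
        exact iSup_congr fun l => by ac_rfl
    _ = mmStarLam M lam k i := by
        rw [mmMul_mmStar]
        refine le_antisymm (inf_le_inf_left _ ?_) (le_inf inf_le_left ?_)
        · rw [mmStar_eq_mmId_sup_mmPlus]
          exact le_sup_right
        · exact (inf_le_inf_right _ inf_le_right).trans (mmPlus_inf_mmStar_le M k i)

lemma mmVec_mmStarLam_fixed (z : α → B) :
    mmVec M (mmVec (mmStarLam M lam) z) = mmVec (mmStarLam M lam) z := by
  rw [← mmVec_mmMul, mmMul_mmStarLam]

lemma mmVec_mmPow_card_le_mmStarLam {x : α → B} (hx : mmVec M x ≤ x) (hlam : ∀ i, x i ≤ lam) :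
    mmVec (mmPow M (Fintype.card α)) x ≤ mmVec (mmStarLam M lam) x := by
  intro k
  refine iSup_le fun l => ?_
  rw [mmPow_eq_iSup_walkWeight, iSup₂_inf_eq]
  refine iSup₂_le fun p ⟨hk, hl⟩ => ?_
  obtain ⟨s, t, hst, ht, hpst⟩ := exists_lt_le_card_eq p
  refine le_iSup_of_le (p s) (le_inf (le_inf (le_inf ?_ ?_) ?_) ?_)
  · exact inf_le_right.trans (hlam l)
  · have hcycle := walkWeight_le_mmPow_segment M p hst.le ht
    rw [← hpst] at hcycle
    exact inf_le_left.trans (hcycle.trans (mmPow_le_mmPlus M (by omega) (by omega) _ _))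
  · have hprefix := walkWeight_le_mmPow_segment M p (Nat.zero_le s) (hst.le.trans ht)
    rw [hk, Nat.sub_zero] at hprefix
    exact inf_le_left.trans (hprefix.trans (mmPow_le_mmStar_of_lt M (by omega) _ _))
  · have hsuffix := walkWeight_le_mmPow_segment M p (hst.le.trans ht) le_rfl
    rw [hl] at hsuffix
    calc walkWeight M (Fintype.card α) p ⊓ x l
        ≤ mmPow M (Fintype.card α - s) (p s) l ⊓ x l := inf_le_inf_right _ hsuffix
      _ ≤ mmVec (mmPow M (Fintype.card α - s)) x (p s) :=
        le_iSup (fun j => mmPow M _ (p s) j ⊓ x j) l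
      _ ≤ x (p s) := mmVec_mmPow_le M hx le_rfl _ _

lemma eq_mmStar_sup_mmStarLam {x b : α → B} (hx : mmVec M x ⊔ b = x) (hlam : ∀ i, x i ≤ lam) :
    x = mmVec (mmStar M) b ⊔ mmVec (mmStarLam M lam) x := by
  have hsub : mmVec M x ≤ x := le_sup_left.trans hx.le
  refine le_antisymm ?_ (sup_le (mmVec_mmStar_le M hsub (le_sup_right.trans hx.le)) ?_)
  · calc x ≤ mmVec (mmPow M (Fintype.card α)) x ⊔ mmVec (mmStar M) b := le_mmPow_sup_mmStar M hx _
      _ ≤ mmVec (mmStar M) b ⊔ mmVec (mmStarLam M lam) x := by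
        rw [sup_comm]
        exact sup_le_sup_left (mmVec_mmPow_card_le_mmStarLam M lam hsub hlam) _
  · calc mmVec (mmStarLam M lam) x ≤ mmVec (mmStar M) x :=
        fun k => iSup_mono fun i => inf_le_inf_right _ inf_le_right
      _ ≤ x := mmVec_mmStar_le M hsub le_rfl

end StarLam

theorem stmt13_general {n : ℕ} (A : Matrix (Fin n) (Fin n) B) (lam : B) (K L : Finset (Fin n))
    (xL : ↥L → B) :
    ((∃ xK : ↥K → B,
        (∀ i, mmVec (subM A K K) xK i ⊔ mmVec (subM A K L) xL i = xK i) ∧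
        ∀ i, xK i ≤ lam) ↔
      ∀ i, mmVec (mmMul (mmStar (subM A K K)) (subM A K L)) xL i ≤ lam) ∧
    ((∀ i, mmVec (mmMul (mmStar (subM A K K)) (subM A K L)) xL i ≤ lam) →
      ∀ xK : ↥K → B,
        (((∀ i, mmVec (subM A K K) xK i ⊔ mmVec (subM A K L) xL i = xK i) ∧
            ∀ i, xK i ≤ lam) ↔
          ∃ v : ↥K → B, mmVec (subM A K K) v = v ∧ (∀ i, v i ≤ lam) ∧
            xK = fun i => mmVec (mmMul (mmStar (subM A K K)) (subM A K L)) xL i ⊔ v i) ∧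
        (((∀ i, mmVec (subM A K K) xK i ⊔ mmVec (subM A K L) xL i = xK i) ∧
            ∀ i, xK i ≤ lam) ↔
          ∃ z : ↥K → B,
            xK = fun i => mmVec (mmMul (mmStar (subM A K K)) (subM A K L)) xL i ⊔
              mmVec (mmStarLam (subM A K K) lam) z i)) := by
  rw [mmVec_mmMul]
  set M := subM A K K
  set b := mmVec (subM A K L) xL
  set c := mmVec (mmStar M) b
  have hc : mmVec M c ⊔ b = c := by rw [sup_comm]; exact (mmVec_mmStar_eq_sup M b).symm
  have hsol (x : ↥K → B) : (∀ i, mmVec M x i ⊔ b i = x i) ↔ mmVec M x ⊔ b = x := funext_iff.symm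
  simp only [hsol]
  refine ⟨⟨fun ⟨x, hx, hxl⟩ i => ?_, fun hcl => ⟨c, hc, hcl⟩⟩, fun hcl x => ?_⟩
  · exact (mmVec_mmStar_le M (le_sup_left.trans hx.le) (le_sup_right.trans hx.le) i).trans (hxl i)
  have hfixed (v : ↥K → B) (hv : mmVec M v = v) (hvl : ∀ i, v i ≤ lam) :
      mmVec M (c ⊔ v) ⊔ b = c ⊔ v ∧ ∀ i, (c ⊔ v) i ≤ lam :=
    ⟨mmVec_sup_of_fixed M hc hv, fun i => sup_le (hcl i) (hvl i)⟩
  refine ⟨⟨fun ⟨hx, hxl⟩ => ?_, fun ⟨v, hv, hvl, hxv⟩ => hxv ▸ hfixed v hv hvl⟩,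
    ⟨fun ⟨hx, hxl⟩ => ⟨x, eq_mmStar_sup_mmStarLam M lam hx hxl⟩, fun ⟨z, hxz⟩ => ?_⟩⟩
  · exact ⟨_, mmVec_mmStarLam_fixed M lam x, mmVec_mmStarLam_le M lam x,
      eq_mmStar_sup_mmStarLam M lam hx hxl⟩
  · exact hxz ▸ hfixed _ (mmVec_mmStarLam_fixed M lam z) (mmVec_mmStarLam_le M lam z)

/-- For fixed `x_L`, the equation `A_{KK} ⊗ x_K ⊕ A_{KL} ⊗ x_L = x_K`
has a solution `x_K ≤ λ·1_K` iff `(A_{KK})* ⊗ A_{KL} ⊗ x_L ≤ λ·1_K`; in that case the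
set of such solutions equals `{(A_{KK})* ⊗ A_{KL} ⊗ x_L ⊕ v : A_{KK} ⊗ v = v, v ≤ λ·1_K}`,
which also equals `{(A_{KK})* ⊗ A_{KL} ⊗ x_L ⊕ (A_{KK})*_λ ⊗ z : z ∈ B^{|K|}}`. -/
theorem stmt13 {n : ℕ} (A : Matrix (Fin n) (Fin n) B) (lam : B) (K L : Finset (Fin n))
    (hU : K ∪ L = Finset.univ) (hD : Disjoint K L) (xL : ↥L → B) :
    ((∃ xK : ↥K → B,
        (∀ i, mmVec (subM A K K) xK i ⊔ mmVec (subM A K L) xL i = xK i) ∧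
        ∀ i, xK i ≤ lam) ↔
      ∀ i, mmVec (mmMul (mmStar (subM A K K)) (subM A K L)) xL i ≤ lam) ∧
    ((∀ i, mmVec (mmMul (mmStar (subM A K K)) (subM A K L)) xL i ≤ lam) →
      ∀ xK : ↥K → B,
        (((∀ i, mmVec (subM A K K) xK i ⊔ mmVec (subM A K L) xL i = xK i) ∧
            ∀ i, xK i ≤ lam) ↔
          ∃ v : ↥K → B, mmVec (subM A K K) v = v ∧ (∀ i, v i ≤ lam) ∧
            xK = fun i => mmVec (mmMul (mmStar (subM A K K)) (subM A K L)) xL i ⊔ v i) ∧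
        (((∀ i, mmVec (subM A K K) xK i ⊔ mmVec (subM A K L) xL i = xK i) ∧
            ∀ i, xK i ≤ lam) ↔
          ∃ z : ↥K → B,
            xK = fun i => mmVec (mmMul (mmStar (subM A K K)) (subM A K L)) xL i ⊔
              mmVec (mmStarLam (subM A K K) lam) z i)) :=
  stmt13_general A lam K L xL
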